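/- If the joint distribution factors as P(Y=y, M=m, R^M=r, R^Y=s | T=t, X=x) with R^M ⊥ (Y, R^Y) | (M, T, X) and R^Y ⊥ (M, R^M) | (Y, T, X), then for all y, m, t, x with positive conditioning probabilities: P(M=m, Y=y, R^M=1, R^Y=1 | T=t, X=x) = P(M=m, Y=y | T=t, X=x) · P(R^M=1 | M=m, T=t, X=x) · P(R^Y=1 | Y=y, T=t, X=x). -/

import Mathlib

open Finset
open scoped Classical

/-- The probability of the event `A` under the probability mass function `p`. -/
noncomputable def pr {Ω : Type*} [Fintype Ω] (p : Ω → ℝ) (A : Ω → Prop) : ℝ :=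
  ∑ ω, if A ω then p ω else 0

/-!
Write `A = P(M=m, T, X)`, `B = P(Y=y, T, X)` and `K = P(M=m, Y=y, R^Y=1, T, X)`.
The first independence gives `A · P(M=m, Y=y, R^M=1, R^Y=1, T, X) = P(R^M=1, M=m, T, X) · K`;
the second, summed over the value of `R^M`, gives `B · K = P(R^Y=1, Y=y, T, X) · P(M=m, Y=y, T, X)`.
Eliminating `K` and dividing by `P(T, X)` is the claimed factorization.
-/

section pr

variable {Ω : Type*} [Fintype Ω] (p : Ω → ℝ)

lemma pr_congr {A B : Ω → Prop} (h : ∀ ω, A ω ↔ B ω) : pr p A = pr p B :=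
  congrArg (pr p) (funext fun ω => propext (h ω))

lemma pr_eq_sum_pr_and_eq {β : Type*} [Fintype β] (Q : Ω → Prop) (f : Ω → β) :
    pr p Q = ∑ b, pr p (fun ω => Q ω ∧ f ω = b) := by
  unfold pr
  rw [Finset.sum_comm]
  refine Finset.sum_congr rfl fun ω _ => ?_
  by_cases hQ : Q ω <;> simp [hQ]

lemma mul_pr_eq_of_forall_fibre {β : Type*} [Fintype β] {Q Q' : Ω → Prop} (f : Ω → β)
    {a b : ℝ} (h : ∀ r, a * pr p (fun ω => Q ω ∧ f ω = r) = b * pr p (fun ω => Q' ω ∧ f ω = r)) :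
    a * pr p Q = b * pr p Q' := by
  rw [pr_eq_sum_pr_and_eq p Q f, pr_eq_sum_pr_and_eq p Q' f, Finset.mul_sum, Finset.mul_sum]
  exact Finset.sum_congr rfl fun r _ => h r

end pr

theorem theorem3_factorization_general
    {Ω 𝓜 𝓨 𝓣 𝓧 : Type*} [Fintype Ω]
    (p : Ω → ℝ)
    (M : Ω → 𝓜) (Y : Ω → 𝓨) (RM RY : Ω → Bool) (T : Ω → 𝓣) (X : Ω → 𝓧)
    -- conditional independence  R^M ⊥ (Y, R^Y) | (M, T, X)
    (hCI1 : ∀ m y r s t x,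
      pr p (fun ω => M ω = m ∧ T ω = t ∧ X ω = x) *
          pr p (fun ω => M ω = m ∧ T ω = t ∧ X ω = x ∧ RM ω = r ∧ Y ω = y ∧ RY ω = s) =
        pr p (fun ω => M ω = m ∧ T ω = t ∧ X ω = x ∧ RM ω = r) *
          pr p (fun ω => M ω = m ∧ T ω = t ∧ X ω = x ∧ Y ω = y ∧ RY ω = s))
    -- conditional independence  R^Y ⊥ (M, R^M) | (Y, T, X)
    (hCI2 : ∀ m y r s t x,
      pr p (fun ω => Y ω = y ∧ T ω = t ∧ X ω = x) *
          pr p (fun ω => Y ω = y ∧ T ω = t ∧ X ω = x ∧ RY ω = s ∧ M ω = m ∧ RM ω = r) =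
        pr p (fun ω => Y ω = y ∧ T ω = t ∧ X ω = x ∧ RY ω = s) *
          pr p (fun ω => Y ω = y ∧ T ω = t ∧ X ω = x ∧ M ω = m ∧ RM ω = r)) :
    ∀ m y t x,
      0 < pr p (fun ω => T ω = t ∧ X ω = x) →
      0 < pr p (fun ω => M ω = m ∧ T ω = t ∧ X ω = x) →
      0 < pr p (fun ω => Y ω = y ∧ T ω = t ∧ X ω = x) →
      pr p (fun ω => M ω = m ∧ Y ω = y ∧ RM ω = true ∧ RY ω = true ∧ T ω = t ∧ X ω = x) /
          pr p (fun ω => T ω = t ∧ X ω = x) =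
        (pr p (fun ω => M ω = m ∧ Y ω = y ∧ T ω = t ∧ X ω = x) /
            pr p (fun ω => T ω = t ∧ X ω = x)) *
          (pr p (fun ω => RM ω = true ∧ M ω = m ∧ T ω = t ∧ X ω = x) /
            pr p (fun ω => M ω = m ∧ T ω = t ∧ X ω = x)) *
          (pr p (fun ω => RY ω = true ∧ Y ω = y ∧ T ω = t ∧ X ω = x) /
            pr p (fun ω => Y ω = y ∧ T ω = t ∧ X ω = x)) := by
  intro m y t x _ hA hB
  set K := pr p (fun ω => M ω = m ∧ T ω = t ∧ X ω = x ∧ Y ω = y ∧ RY ω = true)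
  have hRM : pr p (fun ω => M ω = m ∧ T ω = t ∧ X ω = x) *
      pr p (fun ω => M ω = m ∧ Y ω = y ∧ RM ω = true ∧ RY ω = true ∧ T ω = t ∧ X ω = x) =
      pr p (fun ω => RM ω = true ∧ M ω = m ∧ T ω = t ∧ X ω = x) * K := by
    convert hCI1 m y true true t x using 2 <;> exact pr_congr p fun ω => by tauto
  have hRY : pr p (fun ω => Y ω = y ∧ T ω = t ∧ X ω = x) * K =
      pr p (fun ω => RY ω = true ∧ Y ω = y ∧ T ω = t ∧ X ω = x) *
        pr p (fun ω => M ω = m ∧ Y ω = y ∧ T ω = t ∧ X ω = x) := by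
    have hmarg := mul_pr_eq_of_forall_fibre p RM
      (Q := fun ω => Y ω = y ∧ T ω = t ∧ X ω = x ∧ RY ω = true ∧ M ω = m)
      (Q' := fun ω => Y ω = y ∧ T ω = t ∧ X ω = x ∧ M ω = m)
      fun r => by simpa only [and_assoc] using hCI2 m y r true t x
    convert hmarg using 2 <;> exact pr_congr p fun ω => by tauto
  field_simp
  linear_combination pr p (fun ω => Y ω = y ∧ T ω = t ∧ X ω = x) * hRM +
    pr p (fun ω => RM ω = true ∧ M ω = m ∧ T ω = t ∧ X ω = x) * hRY

/-- The algebraic core of Theorem 3: with `R^M ⊥ (Y, R^Y) | (M, T, X)` and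
`R^Y ⊥ (M, R^M) | (Y, T, X)`, for all `y, m, t, x` with positive conditioning
probabilities,
`P(M=m, Y=y, R^M=1, R^Y=1 | T=t, X=x) = P(M=m, Y=y | T=t, X=x) ·
  P(R^M=1 | M=m, T=t, X=x) · P(R^Y=1 | Y=y, T=t, X=x)`. -/
theorem theorem3_factorization
    {Ω 𝓜 𝓨 𝓣 𝓧 : Type*} [Fintype Ω] [Fintype 𝓜] [Fintype 𝓨] [Fintype 𝓣] [Fintype 𝓧]
    (p : Ω → ℝ) (hp0 : ∀ ω, 0 ≤ p ω) (hp1 : ∑ ω, p ω = 1)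
    (M : Ω → 𝓜) (Y : Ω → 𝓨) (RM RY : Ω → Bool) (T : Ω → 𝓣) (X : Ω → 𝓧)
    -- conditional independence  R^M ⊥ (Y, R^Y) | (M, T, X)
    (hCI1 : ∀ m y r s t x,
      pr p (fun ω => M ω = m ∧ T ω = t ∧ X ω = x) *
          pr p (fun ω => M ω = m ∧ T ω = t ∧ X ω = x ∧ RM ω = r ∧ Y ω = y ∧ RY ω = s) =
        pr p (fun ω => M ω = m ∧ T ω = t ∧ X ω = x ∧ RM ω = r) *
          pr p (fun ω => M ω = m ∧ T ω = t ∧ X ω = x ∧ Y ω = y ∧ RY ω = s))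
    -- conditional independence  R^Y ⊥ (M, R^M) | (Y, T, X)
    (hCI2 : ∀ m y r s t x,
      pr p (fun ω => Y ω = y ∧ T ω = t ∧ X ω = x) *
          pr p (fun ω => Y ω = y ∧ T ω = t ∧ X ω = x ∧ RY ω = s ∧ M ω = m ∧ RM ω = r) =
        pr p (fun ω => Y ω = y ∧ T ω = t ∧ X ω = x ∧ RY ω = s) *
          pr p (fun ω => Y ω = y ∧ T ω = t ∧ X ω = x ∧ M ω = m ∧ RM ω = r)) :
    ∀ m y t x,
      0 < pr p (fun ω => T ω = t ∧ X ω = x) →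
      0 < pr p (fun ω => M ω = m ∧ T ω = t ∧ X ω = x) →
      0 < pr p (fun ω => Y ω = y ∧ T ω = t ∧ X ω = x) →
      pr p (fun ω => M ω = m ∧ Y ω = y ∧ RM ω = true ∧ RY ω = true ∧ T ω = t ∧ X ω = x) /
          pr p (fun ω => T ω = t ∧ X ω = x) =
        (pr p (fun ω => M ω = m ∧ Y ω = y ∧ T ω = t ∧ X ω = x) /
            pr p (fun ω => T ω = t ∧ X ω = x)) *
          (pr p (fun ω => RM ω = true ∧ M ω = m ∧ T ω = t ∧ X ω = x) /
            pr p (fun ω => M ω = m ∧ T ω = t ∧ X ω = x)) *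
          (pr p (fun ω => RY ω = true ∧ Y ω = y ∧ T ω = t ∧ X ω = x) /
            pr p (fun ω => Y ω = y ∧ T ω = t ∧ X ω = x)) :=
  theorem3_factorization_general p M Y RM RY T X hCI1 hCI2
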